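/- Let p = (p₁,...,p_C) be a descending-sorted probability vector with p_k ≤ τ_pos for some k < C, and suppose the gap condition p_{k+1} ≤ p_k - τ_neg holds with τ_neg ≥ τ_pos - ε/(C-k) for some ε ≥ 0. Then the tail mass ∑_{i>k} p_i ≤ ε. -/

import Mathlib

/-! The tail has `C - k` entries, each at most `p (k+1) ≤ p k - τneg ≤ τpos - τneg ≤ ε / (C - k)`. -/

lemma sum_Icc_le_card_mul_of_antitoneOn {p : ℕ → ℝ} {a b : ℕ}
    (hp : AntitoneOn p (Set.Icc a b)) :
    ∑ i ∈ Finset.Icc a b, p i ≤ ((b + 1 - a : ℕ) : ℝ) * p a := by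
  calc ∑ i ∈ Finset.Icc a b, p i ≤ ∑ _i ∈ Finset.Icc a b, p a := by
        refine Finset.sum_le_sum fun i hi => ?_
        obtain ⟨hai, hib⟩ := Finset.mem_Icc.mp hi
        exact hp ⟨le_rfl, hai.trans hib⟩ ⟨hai, hib⟩ hai
    _ = ((b + 1 - a : ℕ) : ℝ) * p a := by
        rw [Finset.sum_const, Nat.card_Icc, nsmul_eq_mul]

theorem tail_mass_le_eps_of_threshold_choice_general
    (C : ℕ) (p : ℕ → ℝ)
    (hmono : ∀ i j, 1 ≤ i → i ≤ j → j ≤ C → p j ≤ p i)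
    (k : ℕ) (hkC : k < C)
    (τpos τneg ε : ℝ)
    (hpk : p k ≤ τpos)
    (hτ : τpos - ε / ((C - k : ℕ) : ℝ) ≤ τneg)
    (hgap : p (k + 1) ≤ p k - τneg) :
    ∑ i ∈ Finset.Icc (k + 1) C, p i ≤ ε := by
  have hlen : (0 : ℝ) < ((C - k : ℕ) : ℝ) := by exact_mod_cast Nat.sub_pos_of_lt hkC
  have htail : AntitoneOn p (Set.Icc (k + 1) C) := fun i hi j hj hij =>
    hmono i j (Nat.le_add_left 1 k |>.trans hi.1) hij hj.2
  calc ∑ i ∈ Finset.Icc (k + 1) C, p i ≤ ((C - k : ℕ) : ℝ) * p (k + 1) := by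
        simpa only [Nat.add_sub_add_right] using sum_Icc_le_card_mul_of_antitoneOn htail
    _ ≤ ((C - k : ℕ) : ℝ) * (ε / ((C - k : ℕ) : ℝ)) := by gcongr; linarith
    _ = ε := mul_div_cancel₀ ε hlen.ne'

/-- Choosing `τ_neg ≥ τ_pos - ε/(C-k)` controls the tail (negative
pseudo-label) mass to at most `ε`. -/
theorem tail_mass_le_eps_of_threshold_choice
    (C : ℕ) (p : ℕ → ℝ)
    (hnn : ∀ i, 1 ≤ i → i ≤ C → 0 ≤ p i)
    (hmono : ∀ i j, 1 ≤ i → i ≤ j → j ≤ C → p j ≤ p i)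
    (hsum : ∑ i ∈ Finset.Icc 1 C, p i = 1)
    (k : ℕ) (hk1 : 1 ≤ k) (hkC : k < C)
    (τpos τneg ε : ℝ) (hτpos : 0 ≤ τpos) (hτneg : 0 ≤ τneg) (hε : 0 ≤ ε)
    (hpk : p k ≤ τpos)
    (hτ : τpos - ε / ((C - k : ℕ) : ℝ) ≤ τneg)
    (hgap : p (k + 1) ≤ p k - τneg) :
    ∑ i ∈ Finset.Icc (k + 1) C, p i ≤ ε :=
  tail_mass_le_eps_of_threshold_choice_general C p hmono k hkC τpos τneg ε hpk hτ hgap
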